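/- arXiv:1810.07863 — 2 statements merged into one kernel-verified Lean document; each statement's English description precedes it below -/
import Mathlib

section
/- Fix ε ∈ [0,1). For any general source X and any ε₁, ε₂ ≥ 0 satisfying ε₁ + ε₂ = ε, it holds that R(ε₁,ε₂|X) = R(ε,0|X) = R(0,ε|X) = H̄_ε(X). -/
open Filter MeasureTheory

namespace NY

/-- A probability distribution on a set, given by its point mass function. -/
structure Dist (α : Type*) where
  p : α → ℝ
  nonneg : ∀ x, 0 ≤ p x
  hasSum : HasSum p 1

/-- The probability of a set under a distribution. -/
noncomputable def Dist.pr {α : Type*} (P : Dist α) (A : Set α) : ℝ := ∑' x : A, P.p x.1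

/-- 𝒰* : nonempty finite strings over the code alphabet 𝒰 = {1,…,K}. -/
abbrev Word (K : ℕ) := {u : List (Fin K) // u ≠ []}

/-- Length of a string, as a real number. -/
noncomputable def wlen {K : ℕ} (u : Word K) : ℝ := u.1.length

/-- Error probability of a variable-length code (φ, ψ). -/
noncomputable def errP {α : Type*} {K : ℕ} (P : Dist α) (φ : α → Word K) (ψ : Word K → α) : ℝ :=
  P.pr {x | ψ (φ x) ≠ x}

/-- Overflow probability of an encoder φ with threshold η. -/
noncomputable def ovP {α : Type*} {K : ℕ} (P : Dist α) (φ : α → Word K) (η : ℝ) : ℝ :=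
  P.pr {x | wlen (φ x) > η}

/-- A general source: for each blocklength n, a distribution on 𝒳^n. -/
abbrev Source (𝒳 : Type*) := (n : ℕ) → Dist (Fin n → 𝒳)

/-- The limit as ν ↓ 0 of a function g which is nonincreasing in ν
(the limit exists by monotonicity and equals the supremum over ν > 0). -/
noncomputable def limNu (g : ℝ → ℝ) : ℝ := sSup (g '' Set.Ioi (0 : ℝ))

variable {𝒳 : Type*}

/-- A rate R ≥ 0 is (ε,δ)-achievable. -/
def FirstAch (K : ℕ) (X : Source 𝒳) (ε δ R : ℝ) : Prop :=
  0 ≤ R ∧ ∃ (φ : ∀ n, (Fin n → 𝒳) → Word K) (ψ : ∀ n, Word K → (Fin n → 𝒳)),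
    limsup (fun n => errP (X n) (φ n) (ψ n)) atTop ≤ ε ∧
    limsup (fun n => ovP (X n) (φ n) ((n : ℝ) * R)) atTop ≤ δ

/-- The first-order (ε,δ)-optimum threshold R(ε,δ|X). -/
noncomputable def Ropt (K : ℕ) (X : Source 𝒳) (ε δ : ℝ) : ℝ :=
  sInf {R | FirstAch K X ε δ R}

/-- L is (ε,δ,R)-achievable (second order). -/
def SecondAch (K : ℕ) (X : Source 𝒳) (ε δ R L : ℝ) : Prop :=
  ∃ (φ : ∀ n, (Fin n → 𝒳) → Word K) (ψ : ∀ n, Word K → (Fin n → 𝒳)),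
    limsup (fun n => errP (X n) (φ n) (ψ n)) atTop ≤ ε ∧
    limsup (fun n => ovP (X n) (φ n) ((n : ℝ) * R + Real.sqrt (n : ℝ) * L)) atTop ≤ δ

/-- The second-order (ε,δ,R)-optimum threshold L(ε,δ,R|X). -/
noncomputable def Lopt (K : ℕ) (X : Source 𝒳) (ε δ R : ℝ) : ℝ :=
  sInf {L | SecondAch K X ε δ R L}

/-- A rate R ≥ 0 is optimistically (ε,δ)-achievable. -/
def OptFirstAch (K : ℕ) (X : Source 𝒳) (ε δ R : ℝ) : Prop :=
  0 ≤ R ∧ ∃ (φ : ∀ n, (Fin n → 𝒳) → Word K) (ψ : ∀ n, Word K → (Fin n → 𝒳)),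
    ∀ γ > (0 : ℝ), ∃ ns : ℕ → ℕ, StrictMono ns ∧ ∀ i,
      errP (X (ns i)) (φ (ns i)) (ψ (ns i)) ≤ ε + γ ∧
      ovP (X (ns i)) (φ (ns i)) ((ns i : ℝ) * R) ≤ δ + γ

/-- The optimistic first-order (ε,δ)-optimum threshold R*(ε,δ|X). -/
noncomputable def RoptStar (K : ℕ) (X : Source 𝒳) (ε δ : ℝ) : ℝ :=
  sInf {R | OptFirstAch K X ε δ R}

/-- L is optimistically (ε,δ,R)-achievable. -/
def OptSecondAch (K : ℕ) (X : Source 𝒳) (ε δ R L : ℝ) : Prop :=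
  ∃ (φ : ∀ n, (Fin n → 𝒳) → Word K) (ψ : ∀ n, Word K → (Fin n → 𝒳)),
    ∀ γ > (0 : ℝ), ∃ ns : ℕ → ℕ, StrictMono ns ∧ ∀ i,
      errP (X (ns i)) (φ (ns i)) (ψ (ns i)) ≤ ε + γ ∧
      ovP (X (ns i)) (φ (ns i)) ((ns i : ℝ) * R + Real.sqrt (ns i : ℝ) * L) ≤ δ + γ

/-- The optimistic second-order (ε,δ,R)-optimum threshold L*(ε,δ,R|X). -/
noncomputable def LoptStar (K : ℕ) (X : Source 𝒳) (ε δ R : ℝ) : ℝ :=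
  sInf {L | OptSecondAch K X ε δ R L}

/-- A rate R ≥ 0 is type I (ε,δ)-achievable. -/
def TypeIAch (K : ℕ) (X : Source 𝒳) (ε δ R : ℝ) : Prop :=
  0 ≤ R ∧ ∃ (φ : ∀ n, (Fin n → 𝒳) → Word K) (ψ : ∀ n, Word K → (Fin n → 𝒳)),
    limsup (fun n => errP (X n) (φ n) (ψ n)) atTop ≤ ε ∧
    liminf (fun n => ovP (X n) (φ n) ((n : ℝ) * R)) atTop ≤ δ

/-- R†(ε,δ|X). -/
noncomputable def Rdagger (K : ℕ) (X : Source 𝒳) (ε δ : ℝ) : ℝ :=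
  sInf {R | TypeIAch K X ε δ R}

/-- A rate R ≥ 0 is type II (ε,δ)-achievable. -/
def TypeIIAch (K : ℕ) (X : Source 𝒳) (ε δ R : ℝ) : Prop :=
  0 ≤ R ∧ ∃ (φ : ∀ n, (Fin n → 𝒳) → Word K) (ψ : ∀ n, Word K → (Fin n → 𝒳)),
    liminf (fun n => errP (X n) (φ n) (ψ n)) atTop ≤ ε ∧
    limsup (fun n => ovP (X n) (φ n) ((n : ℝ) * R)) atTop ≤ δ

/-- R‡(ε,δ|X). -/
noncomputable def Rddagger (K : ℕ) (X : Source 𝒳) (ε δ : ℝ) : ℝ :=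
  sInf {R | TypeIIAch K X ε δ R}

/-- H̄_γ(X) := inf{ R : limsup_n Pr{ (1/n) log(1/P_{X^n}(X^n)) > R } ≤ γ }. -/
noncomputable def Hbar (K : ℕ) (X : Source 𝒳) (γ : ℝ) : ℝ :=
  sInf {R | limsup (fun n =>
    (X n).pr {x | Real.logb (K : ℝ) (1 / (X n).p x) / (n : ℝ) > R}) atTop ≤ γ}

/-- H̄*_γ(X) (optimistic version, with liminf). -/
noncomputable def HbarStar (K : ℕ) (X : Source 𝒳) (γ : ℝ) : ℝ :=
  sInf {R | liminf (fun n =>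
    (X n).pr {x | Real.logb (K : ℝ) (1 / (X n).p x) / (n : ℝ) > R}) atTop ≤ γ}

/-- H̄_γ(R|X) := inf{ L : limsup_n Pr{ (1/n) log(1/P_{X^n}(X^n)) > R + L/√n } ≤ γ }. -/
noncomputable def Hbar2 (K : ℕ) (X : Source 𝒳) (γ R : ℝ) : ℝ :=
  sInf {L | limsup (fun n =>
    (X n).pr {x | Real.logb (K : ℝ) (1 / (X n).p x) / (n : ℝ)
      > R + L / Real.sqrt (n : ℝ)}) atTop ≤ γ}

/-- H̄*_γ(R|X) (optimistic version, with liminf). -/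
noncomputable def Hbar2Star (K : ℕ) (X : Source 𝒳) (γ R : ℝ) : ℝ :=
  sInf {L | liminf (fun n =>
    (X n).pr {x | Real.logb (K : ℝ) (1 / (X n).p x) / (n : ℝ)
      > R + L / Real.sqrt (n : ℝ)}) atTop ≤ γ}

/-- F(ε,R) := limsup_n inf_{A : Pr(A) ≥ 1−ε} Pr{ −(1/n) log P_{X^n}(X^n) ≥ R, X^n ∈ A }. -/
noncomputable def Fspec (K : ℕ) (X : Source 𝒳) (ε R : ℝ) : ℝ :=
  limsup (fun n =>
    sInf ((fun A : Set (Fin n → 𝒳) =>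
        (X n).pr (A ∩ {x | -Real.logb (K : ℝ) ((X n).p x) / (n : ℝ) ≥ R})) ''
      {A | (X n).pr A ≥ 1 - ε})) atTop

/-- H̃_{ε,δ}(X) := inf{ R : F(ε,R) ≤ δ }. -/
noncomputable def Htilde (K : ℕ) (X : Source 𝒳) (ε δ : ℝ) : ℝ :=
  sInf {R | Fspec K X ε R ≤ δ}

/-- G_{ε,δ}(X). -/
noncomputable def Gfirst (K : ℕ) (X : Source 𝒳) (ε δ : ℝ) : ℝ :=
  sInf {R | limNu (fun ν => limsup (fun n =>
    sInf ((fun A : Set (Fin n → 𝒳) =>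
        (X n).pr (A ∩ {x | -Real.logb (K : ℝ) ((X n).p x / (X n).pr A) / (n : ℝ) ≥ R})) ''
      {A | (X n).pr A ≥ 1 - ε - ν})) atTop) ≤ δ}

/-- G*_{ε,δ}(X) (optimistic version, with liminf). -/
noncomputable def GfirstStar (K : ℕ) (X : Source 𝒳) (ε δ : ℝ) : ℝ :=
  sInf {R | limNu (fun ν => liminf (fun n =>
    sInf ((fun A : Set (Fin n → 𝒳) =>
        (X n).pr (A ∩ {x | -Real.logb (K : ℝ) ((X n).p x / (X n).pr A) / (n : ℝ) ≥ R})) ''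
      {A | (X n).pr A ≥ 1 - ε - ν})) atTop) ≤ δ}

/-- G_{ε,δ}(R|X). -/
noncomputable def Gsecond (K : ℕ) (X : Source 𝒳) (ε δ R : ℝ) : ℝ :=
  sInf {L | limNu (fun ν => limsup (fun n =>
    sInf ((fun A : Set (Fin n → 𝒳) =>
        (X n).pr (A ∩ {x | -Real.logb (K : ℝ) ((X n).p x / (X n).pr A) / (n : ℝ)
          ≥ R + L / Real.sqrt (n : ℝ)})) ''
      {A | (X n).pr A ≥ 1 - ε - ν})) atTop) ≤ δ}

/-- G*_{ε,δ}(R|X) (optimistic version, with liminf). -/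
noncomputable def GsecondStar (K : ℕ) (X : Source 𝒳) (ε δ R : ℝ) : ℝ :=
  sInf {L | limNu (fun ν => liminf (fun n =>
    sInf ((fun A : Set (Fin n → 𝒳) =>
        (X n).pr (A ∩ {x | -Real.logb (K : ℝ) ((X n).p x / (X n).pr A) / (n : ℝ)
          ≥ R + L / Real.sqrt (n : ℝ)})) ''
      {A | (X n).pr A ≥ 1 - ε - ν})) atTop) ≤ δ}

/-- A rate R is optimistically ε-achievable by fixed-length codes. -/
def FixAchR (K : ℕ) (X : Source 𝒳) (ε R : ℝ) : Prop :=
  ∃ (M : ℕ → ℕ) (φ : ∀ n, (Fin n → 𝒳) → Fin (M n)) (ψ : ∀ n, Fin (M n) → (Fin n → 𝒳)),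
    ∀ γ > (0 : ℝ), ∃ ns : ℕ → ℕ, StrictMono ns ∧ ∀ i,
      (X (ns i)).pr {x | ψ (ns i) (φ (ns i) x) ≠ x} ≤ ε + γ ∧
      Real.logb (K : ℝ) (M (ns i) : ℝ) / (ns i : ℝ) ≤ R + γ

/-- R^f(ε|X). -/
noncomputable def Rfix (K : ℕ) (X : Source 𝒳) (ε : ℝ) : ℝ :=
  sInf {R | FixAchR K X ε R}

/-- A real L is optimistically (ε,R)-achievable by fixed-length codes. -/
def FixAchL (K : ℕ) (X : Source 𝒳) (ε R L : ℝ) : Prop :=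
  ∃ (M : ℕ → ℕ) (φ : ∀ n, (Fin n → 𝒳) → Fin (M n)) (ψ : ∀ n, Fin (M n) → (Fin n → 𝒳)),
    ∀ γ > (0 : ℝ), ∃ ns : ℕ → ℕ, StrictMono ns ∧ ∀ i,
      (X (ns i)).pr {x | ψ (ns i) (φ (ns i) x) ≠ x} ≤ ε + γ ∧
      Real.logb (K : ℝ) ((M (ns i) : ℝ) / (K : ℝ) ^ ((ns i : ℝ) * R)) / Real.sqrt (ns i : ℝ)
        ≤ L + γ

/-- L^f(ε,R|X). -/
noncomputable def Lfix (K : ℕ) (X : Source 𝒳) (ε R : ℝ) : ℝ :=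
  sInf {L | FixAchL K X ε R L}

/-!
Both sides are compared with the tail of the self-information spectrum
`(1/n) log_K (1/P(x))`. Achievability: with codeword length `ℓ ≈ n(R + γ)`, the at most `K^ℓ`
atoms heavier than `K^{-ℓ}` get distinct words of length `ℓ`; the light atoms all have
self-information above `R`, and a finite part of them of mass about `ε₂` is sent injectively
with overlong words, so that the rest, of mass about `ε₁`, is the only source of errors.
Converse: the atoms with self-information above `R + γ` that are decoded correctly from words
of length at most `nR` are at most `(nR + 1) K^{nR}` in number and each has probability at most
`K^{-n(R+γ)}`, so their mass vanishes, and the tail is eventually bounded by the error plus the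
overflow probability.
-/

open Set Topology

theorem Finset.exists_subset_min_le_sum_le {ι : Type*} [DecidableEq ι] {f : ι → ℝ} {c : ℝ}
    (b : ℝ) (hb : 0 ≤ b) (s : Finset ι) (hf : ∀ i ∈ s, 0 ≤ f i) (hfc : ∀ i ∈ s, f i ≤ c) :
    ∃ t ⊆ s, ∑ i ∈ t, f i ≤ b ∧ min (∑ i ∈ s, f i) (b - c) ≤ ∑ i ∈ t, f i := by
  induction s using Finset.induction_on with
  | empty => exact ⟨∅, subset_rfl, by simpa using hb, by simp⟩
  | insert a s ha ih =>
    obtain ⟨t, hts, htb, hmin⟩ := ih (fun i hi => hf i (Finset.mem_insert_of_mem hi))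
      fun i hi => hfc i (Finset.mem_insert_of_mem hi)
    have hfa := hf a (Finset.mem_insert_self a s)
    have hfca := hfc a (Finset.mem_insert_self a s)
    have hat : a ∉ t := fun h => ha (hts h)
    rw [Finset.sum_insert ha]
    by_cases hfit : ∑ i ∈ t, f i + f a ≤ b
    · refine ⟨insert a t, Finset.insert_subset_insert a hts, ?_, ?_⟩ <;> rw [Finset.sum_insert hat]
      · linarith
      · rcases min_choice (∑ i ∈ s, f i) (b - c) with h | h <;> rw [h] at hmin
        · exact (min_le_left _ _).trans (by linarith)
        · exact (min_le_right _ _).trans (by linarith)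
    · exact ⟨t, hts.trans (Finset.subset_insert a s), htb, (min_le_right _ _).trans (by linarith)⟩

theorem List.ncard_setOf_length_le_le {β : Type*} [Fintype β] [Nonempty β] (m : ℕ) :
    {l : List β | l.length ≤ m}.ncard ≤ (m + 1) * Fintype.card β ^ m := by
  let d : β := Classical.arbitrary β
  let code : List β → Fin (m + 1) × (Fin m → β) := fun l =>
    (⟨min l.length m, by omega⟩, fun i => l.getD i d)
  have hcode : InjOn code {l | l.length ≤ m} := by
    intro l (hl : l.length ≤ m) l' (hl' : l'.length ≤ m) h
    simp only [code, Prod.mk.injEq, Fin.mk.injEq, funext_iff] at h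
    have hlen : l.length = l'.length := by omega
    refine List.ext_getElem hlen fun i hi hi' => ?_
    simpa [List.getElem?_eq_getElem, hi, hi'] using h.2 ⟨i, by omega⟩
  calc {l : List β | l.length ≤ m}.ncard ≤ (univ : Set (Fin (m + 1) × (Fin m → β))).ncard :=
        ncard_le_ncard_of_injOn code (fun _ _ => mem_univ _) hcode
    _ = (m + 1) * Fintype.card β ^ m := by simp [Nat.card_eq_fintype_card]

theorem csInf_le_csInf_of_forall_add_mem {s t : Set ℝ} (ht : BddBelow t) (hs : s.Nonempty)
    (h : ∀ x ∈ s, ∀ γ > 0, x + γ ∈ t) : sInf t ≤ sInf s :=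
  le_csInf hs fun x hx => le_of_forall_pos_le_add fun γ hγ => csInf_le ht (h x hx γ hγ)

theorem csInf_eq_csInf_of_forall_add_mem {s t : Set ℝ} (hs : BddBelow s) (ht : BddBelow t)
    (hst : ∀ x ∈ s, ∀ γ > 0, x + γ ∈ t) (hts : ∀ x ∈ t, ∀ γ > 0, x + γ ∈ s) :
    sInf s = sInf t := by
  rcases s.eq_empty_or_nonempty with rfl | ⟨x, hx⟩
  · rw [eq_empty_of_forall_notMem fun y hy => hts y hy 1 one_pos]
  · exact le_antisymm (csInf_le_csInf_of_forall_add_mem hs ⟨x + 1, hst x hx 1 one_pos⟩ hts)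
      (csInf_le_csInf_of_forall_add_mem ht ⟨x, hx⟩ hst)

theorem limsup_le_of_forall_eventually_lt {ι : Type*} {l : Filter ι} [l.NeBot] {u : ι → ℝ}
    {a x : ℝ} (ha : ∀ i, a ≤ u i) (h : ∀ y > x, ∀ᶠ i in l, u i < y) : limsup u l ≤ x :=
  le_of_forall_gt_imp_ge_of_dense fun y hy =>
    limsup_le_of_le (isCoboundedUnder_le_of_le l ha) ((h y hy).mono fun _ => le_of_lt)

theorem eventually_lt_of_limsup_le {ι : Type*} {l : Filter ι} {u : ι → ℝ} {x y C : ℝ}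
    (h : limsup u l ≤ x) (hxy : x < y) (hC : ∀ i, u i ≤ C) : ∀ᶠ i in l, u i < y :=
  eventually_lt_of_limsup_lt (h.trans_lt hxy) (isBoundedUnder_of ⟨C, hC⟩)

theorem Real.lt_logb_one_div_div_iff {b p n t : ℝ} (hb : 1 < b) (hp : 0 < p) (hn : 0 < n) :
    t < Real.logb b (1 / p) / n ↔ p < b ^ (-(n * t)) := by
  rw [lt_div_iff₀ hn, one_div, Real.logb_inv, lt_neg, ← Real.logb_lt_iff_lt_rpow hb hp, mul_comm]

namespace Dist

theorem nonempty {α : Type*} (P : Dist α) : Nonempty α := by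
  by_contra h
  have : IsEmpty α := not_nonempty_iff.1 h
  exact one_ne_zero (HasSum.unique P.hasSum hasSum_empty)

variable {α : Type*} (P : Dist α)

theorem p_le_one (x : α) : P.p x ≤ 1 :=
  le_hasSum P.hasSum x fun y _ => P.nonneg y

theorem logb_one_div_nonneg {b : ℝ} (hb : 1 < b) (x : α) : 0 ≤ Real.logb b (1 / P.p x) := by
  rcases (P.nonneg x).eq_or_lt with h | h
  · simp [← h]
  · exact Real.logb_nonneg hb (one_le_one_div h (P.p_le_one x))

theorem pr_eq_tsum_indicator (A : Set α) : P.pr A = ∑' x, A.indicator P.p x :=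
  tsum_subtype A P.p

theorem summable_indicator (A : Set α) : Summable (A.indicator P.p) :=
  P.hasSum.summable.indicator A

theorem pr_nonneg (A : Set α) : 0 ≤ P.pr A :=
  tsum_nonneg fun x => P.nonneg x

theorem pr_le_one (A : Set α) : P.pr A ≤ 1 :=
  (P.hasSum.summable.tsum_subtype_le P.p A P.nonneg).trans_eq P.hasSum.tsum_eq

theorem pr_univ : P.pr univ = 1 := by
  rw [pr_eq_tsum_indicator, indicator_univ, P.hasSum.tsum_eq]

theorem pr_finset (t : Finset α) : P.pr t = ∑ x ∈ t, P.p x :=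
  Finset.tsum_subtype t P.p

theorem pr_mono_of_ne_zero {A B : Set α} (h : ∀ x ∈ A, P.p x ≠ 0 → x ∈ B) :
    P.pr A ≤ P.pr B := by
  rw [pr_eq_tsum_indicator, pr_eq_tsum_indicator]
  refine (P.summable_indicator A).tsum_le_tsum (fun x => ?_) (P.summable_indicator B)
  by_cases hB : x ∈ B
  · rw [indicator_of_mem hB]
    exact indicator_le_self' (fun y _ => P.nonneg y) x
  · have hA : A.indicator P.p x = 0 := by
      by_cases hA : x ∈ A
      · rw [indicator_of_mem hA]
        exact not_not.1 fun hp => hB (h x hA hp)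
      · exact indicator_of_notMem hA _
    rw [hA]
    exact indicator_nonneg (fun y _ => P.nonneg y) x

theorem pr_mono {A B : Set α} (h : A ⊆ B) : P.pr A ≤ P.pr B :=
  P.pr_mono_of_ne_zero fun _ hx _ => h hx

theorem pr_add_pr_diff {O C : Set α} (h : O ⊆ C) : P.pr O + P.pr (C \ O) = P.pr C := by
  simp only [pr_eq_tsum_indicator]
  rw [← (P.summable_indicator O).tsum_add (P.summable_indicator _),
    ← indicator_union_of_disjoint disjoint_sdiff_right, union_sdiff_cancel h]

theorem pr_union_le (A B : Set α) : P.pr (A ∪ B) ≤ P.pr A + P.pr B := by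
  rw [← P.pr_add_pr_diff subset_union_left, union_sdiff_left]
  exact add_le_add_right (P.pr_mono sdiff_subset) _

theorem pr_le_ncard_mul {A : Set α} (hA : A.Finite) {c : ℝ} (h : ∀ x ∈ A, P.p x ≤ c) :
    P.pr A ≤ A.ncard * c := by
  lift A to Finset α using hA
  rw [pr_finset, ncard_coe_finset, ← nsmul_eq_mul]
  exact Finset.sum_le_card_nsmul A P.p c h

theorem finite_setOf_lt {c : ℝ} (hc : 0 < c) : {x | c < P.p x}.Finite := by
  have := P.hasSum.summable.tendsto_cofinite_zero.eventually (gt_mem_nhds hc)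
  exact (eventually_cofinite.1 this).subset fun x hx => not_lt.2 (le_of_lt hx)

theorem ncard_setOf_lt_mul_le_one {c : ℝ} (hc : 0 < c) : {x | c < P.p x}.ncard * c ≤ 1 := by
  have hfin := P.finite_setOf_lt hc
  lift {x | c < P.p x} to Finset α using hfin with A hA
  have hsum := Finset.card_nsmul_le_sum A P.p c fun x hx => by
    rw [← Finset.mem_coe, hA] at hx
    exact hx.le
  rw [ncard_coe_finset, ← nsmul_eq_mul]
  exact hsum.trans ((P.pr_finset A).symm.trans_le (P.pr_le_one _))

theorem exists_finite_subset_split {C : Set α} {b c : ℝ} (hb : 0 ≤ b) (hc : 0 < c)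
    (hC : ∀ x ∈ C, P.p x ≤ c) :
    ∃ O ⊆ C, O.Finite ∧ P.pr O ≤ b ∧ P.pr (C \ O) ≤ max (P.pr C - b) 0 + c := by
  classical
  obtain ⟨s, hs⟩ : ∃ s : Finset C, P.pr C - c < ∑ x ∈ s, P.p x :=
    ((P.hasSum.summable.subtype C).hasSum.eventually (lt_mem_nhds (sub_lt_self _ hc))).exists
  set s' : Finset α := s.map (Function.Embedding.subtype _)
  have hs'C : (s' : Set α) ⊆ C := fun x hx => by
    obtain ⟨y, -, rfl⟩ := Finset.mem_map.1 hx
    exact y.2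
  obtain ⟨t, hts, htb, hmin⟩ := Finset.exists_subset_min_le_sum_le b hb s'
    (fun x _ => P.nonneg x) fun x hx => hC x (hs'C hx)
  have htC : (t : Set α) ⊆ C := (Finset.coe_subset.2 hts).trans hs'C
  have hsplit := P.pr_add_pr_diff htC
  rw [P.pr_finset] at hsplit
  refine ⟨t, htC, t.finite_toSet, (P.pr_finset t).trans_le htb, ?_⟩
  have hs' : P.pr C - c ≤ ∑ x ∈ s', P.p x :=
    hs.le.trans_eq (Finset.sum_map s (Function.Embedding.subtype _) P.p).symm
  have hlow : min (P.pr C - c) (b - c) ≤ ∑ x ∈ t, P.p x := (min_le_min_right _ hs').trans hmin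
  rcases min_choice (P.pr C - c) (b - c) with h | h <;> rw [h] at hlow <;>
    linarith [le_max_left (P.pr C - b) 0, le_max_right (P.pr C - b) 0]

theorem pr_le_of_injOn_length_le {β : Type*} [Fintype β] [Nonempty β] {f : α → List β}
    {D : Set α} {m : ℕ} {c : ℝ} (hc : 0 ≤ c) (hinj : InjOn f D)
    (hlen : ∀ x ∈ D, (f x).length ≤ m) (hp : ∀ x ∈ D, P.p x ≤ c) :
    P.pr D ≤ (m + 1) * Fintype.card β ^ m * c := by
  have hcard : D.ncard ≤ (m + 1) * Fintype.card β ^ m :=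
    (ncard_le_ncard_of_injOn f hlen hinj (List.finite_length_le β m)).trans
      (List.ncard_setOf_length_le_le m)
  calc P.pr D ≤ D.ncard * c := P.pr_le_ncard_mul (Finite.of_injOn (fun x hx => hlen x hx) hinj
        (List.finite_length_le β m)) hp
    _ ≤ (m + 1) * Fintype.card β ^ m * c := by
      gcongr
      exact_mod_cast hcard

theorem ovP_anti {K : ℕ} (φ : α → Word K) {η η' : ℝ} (h : η ≤ η') : ovP P φ η' ≤ ovP P φ η :=
  P.pr_mono fun _ hx => h.trans_lt hx

theorem pr_le_errP_add_ovP_add {K : ℕ} (hK : 0 < K) (φ : α → Word K) (ψ : Word K → α)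
    {η c : ℝ} (hη : 0 ≤ η) (hc : 0 ≤ c) :
    P.pr {x | P.p x ≤ c} ≤ errP P φ ψ + ovP P φ η + (η + 1) * (K : ℝ) ^ η * c := by
  have : Nonempty (Fin K) := ⟨⟨0, hK⟩⟩
  set D := {x | P.p x ≤ c} ∩ {x | ψ (φ x) = x} ∩ {x | wlen (φ x) ≤ η}
  have hinj : InjOn (fun x => (φ x).1) D := fun x hx y hy hxy => by
    rw [← hx.1.2, ← hy.1.2, Subtype.ext hxy]
  have hD : P.pr D ≤ (⌊η⌋₊ + 1) * (K : ℝ) ^ ⌊η⌋₊ * c := by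
    simpa using P.pr_le_of_injOn_length_le hc hinj
      (fun x hx => Nat.le_floor hx.2) fun x hx => hx.1.1
  have hfloor : (⌊η⌋₊ + 1) * (K : ℝ) ^ ⌊η⌋₊ ≤ (η + 1) * (K : ℝ) ^ η := by
    have hK1 : (1 : ℝ) ≤ K := by exact_mod_cast hK
    have hηfloor := Nat.floor_le hη
    rw [← Real.rpow_natCast]
    gcongr
  have hcover : {x | P.p x ≤ c} ⊆ {x | ψ (φ x) ≠ x} ∪ {x | wlen (φ x) > η} ∪ D := by
    intro x hx
    by_cases he : ψ (φ x) = x <;> by_cases hv : wlen (φ x) ≤ η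
    · exact Or.inr ⟨⟨hx, he⟩, hv⟩
    all_goals simp_all
  calc P.pr {x | P.p x ≤ c}
      ≤ P.pr {x | ψ (φ x) ≠ x} + P.pr {x | wlen (φ x) > η} + P.pr D :=
        (P.pr_mono hcover).trans <| (P.pr_union_le _ _).trans <|
          add_le_add_left (P.pr_union_le _ _) _
    _ ≤ errP P φ ψ + ovP P φ η + (η + 1) * (K : ℝ) ^ η * c :=
      add_le_add_right (hD.trans (mul_le_mul_of_nonneg_right hfloor hc)) _

theorem exists_code_ovP_le_errP_le {K ℓ : ℕ} (hK : 0 < K) (hℓ : 0 < ℓ) {b : ℝ} (hb : 0 ≤ b) :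
    ∃ (φ : α → Word K) (ψ : Word K → α), ovP P φ ℓ ≤ b ∧
      errP P φ ψ ≤ max (P.pr {x | P.p x ≤ ((K : ℝ) ^ ℓ)⁻¹} - b) 0 + ((K : ℝ) ^ ℓ)⁻¹ := by
  classical
  have : NeZero K := ⟨hK.ne'⟩
  have : Nonempty α := P.nonempty
  set c : ℝ := ((K : ℝ) ^ ℓ)⁻¹
  have hc : 0 < c := by positivity
  set A := {x | c < P.p x}
  obtain ⟨O, hOC, hOfin, hOb, hCO⟩ :=
    P.exists_finite_subset_split (C := {x | P.p x ≤ c}) hb hc fun _ hx => hx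
  have hAfin : A.Finite := P.finite_setOf_lt hc
  have hAcard : A.ncard ≤ K ^ ℓ := by
    have h : (A.ncard : ℝ) * ((K : ℝ) ^ ℓ)⁻¹ ≤ 1 := P.ncard_setOf_lt_mul_le_one hc
    rw [mul_inv_le_iff₀ (by positivity), one_mul] at h
    exact_mod_cast h
  obtain ⟨f, -, hf⟩ := hAfin.exists_injOn_of_encard_le (t := (univ : Set (Fin ℓ → Fin K))) (by
    rw [← hAfin.cast_ncard_eq, encard_univ, ENat.card_eq_coe_fintype_card]
    simp only [Fintype.card_fun, Fintype.card_fin]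
    exact_mod_cast hAcard)
  obtain ⟨e, he⟩ := countable_iff_exists_injOn.1 hOfin.countable
  let z : Fin K := 0
  let φ : α → Word K := fun x =>
    if x ∈ A then ⟨List.ofFn (f x), by simpa using hℓ.ne'⟩
    else if x ∈ O then ⟨List.replicate (ℓ + 1 + e x) z, by simp⟩
    else ⟨[z], by simp⟩
  have hφA : ∀ x ∈ A, (φ x).1 = List.ofFn (f x) := fun x hx => by simp [φ, hx]
  have hφO : ∀ x ∈ O, x ∉ A → (φ x).1 = List.replicate (ℓ + 1 + e x) z := fun x hxO hxA => by
    simp [φ, hxA, hxO]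
  have hinj : InjOn φ (A ∪ O) := by
    intro x hx y hy hxy
    have hval := congrArg Subtype.val hxy
    have hlen := congrArg List.length hval
    by_cases hxA : x ∈ A <;> by_cases hyA : y ∈ A
    · rw [hφA x hxA, hφA y hyA] at hval
      exact hf hxA hyA (List.ofFn_injective hval)
    · rw [hφA x hxA, hφO y (hy.resolve_left hyA) hyA] at hlen
      simp only [List.length_ofFn, List.length_replicate] at hlen
      omega
    · rw [hφO x (hx.resolve_left hxA) hxA, hφA y hyA] at hlen
      simp only [List.length_ofFn, List.length_replicate] at hlen
      omega
    · rw [hφO x (hx.resolve_left hxA) hxA, hφO y (hy.resolve_left hyA) hyA] at hlen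
      exact he (hx.resolve_left hxA) (hy.resolve_left hyA) (by simpa using hlen)
  have hshort : ∀ x ∉ O, wlen (φ x) ≤ ℓ := by
    intro x hxO
    by_cases hxA : x ∈ A <;> simp [φ, wlen, hxA, hxO]
    omega
  refine ⟨φ, Function.invFunOn φ (A ∪ O), P.pr_mono (fun x hx => ?_) |>.trans hOb,
    P.pr_mono (fun x hx => ?_) |>.trans hCO⟩
  · by_contra hxO
    exact not_lt.2 (hshort x hxO) hx
  · have hxAO : x ∉ A ∪ O := fun h => hx (hinj.leftInvOn_invFunOn h)
    simp only [mem_union, not_or] at hxAO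
    exact ⟨show P.p x ≤ c from not_lt.1 hxAO.1, hxAO.2⟩

theorem pr_logb_gt_le_pr_setOf_le {b : ℝ} (hb : 1 < b) {n : ℝ} (hn : 0 < n) (t : ℝ) :
    P.pr {x | Real.logb b (1 / P.p x) / n > t} ≤ P.pr {x | P.p x ≤ b ^ (-(n * t))} :=
  P.pr_mono fun x hx => by
    rcases (P.nonneg x).eq_or_lt with h | h
    · rw [mem_ofPred_eq, ← h]
      positivity
    · exact ((Real.lt_logb_one_div_div_iff hb h hn).1 hx).le

theorem pr_setOf_le_le_pr_logb_gt {b : ℝ} (hb : 1 < b) {n : ℝ} (hn : 0 < n) {t c : ℝ}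
    (hc : c < b ^ (-(n * t))) :
    P.pr {x | P.p x ≤ c} ≤ P.pr {x | Real.logb b (1 / P.p x) / n > t} :=
  P.pr_mono_of_ne_zero fun x hx hp =>
    (Real.lt_logb_one_div_div_iff hb ((P.nonneg x).lt_of_ne' hp) hn).2 (lt_of_le_of_lt hx hc)

end Dist

noncomputable def selfInfoTail (K : ℕ) (X : Source 𝒳) (R : ℝ) (n : ℕ) : ℝ :=
  (X n).pr {x | Real.logb (K : ℝ) (1 / (X n).p x) / (n : ℝ) > R}

theorem firstAch_add_of_limsup_selfInfoTail_le {K : ℕ} (hK : 1 < K) (X : Source 𝒳)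
    {a b R γ : ℝ} (ha : 0 ≤ a) (hb : 0 ≤ b) (hR : 0 ≤ R) (hγ : 0 < γ)
    (h : limsup (selfInfoTail K X R) atTop ≤ a + b) : FirstAch K X a b (R + γ) := by
  have hKR : (1 : ℝ) < K := by exact_mod_cast hK
  have hτ : 0 < R + γ / 2 := by positivity
  set ℓ : ℕ → ℕ := fun n => ⌊n * (R + γ / 2)⌋₊ + 1
  have hℓ_gt : ∀ n : ℕ, n * (R + γ / 2) < ℓ n := fun n => by
    simpa [ℓ] using Nat.lt_floor_add_one (n * (R + γ / 2))
  have hℓ_le : ∀ᶠ n : ℕ in atTop, (ℓ n : ℝ) ≤ n * (R + γ) := by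
    have hlarge := tendsto_natCast_atTop_atTop.atTop_mul_const (half_pos hγ)
    filter_upwards [hlarge.eventually_ge_atTop 1] with n hn
    have := Nat.floor_le (by positivity : (0 : ℝ) ≤ n * (R + γ / 2))
    simp only [ℓ, Nat.cast_add, Nat.cast_one]
    linarith
  have hc : Tendsto (fun n => ((K : ℝ) ^ ℓ n)⁻¹) atTop (𝓝 0) := by
    have hℓ_top : Tendsto ℓ atTop atTop := tendsto_atTop_mono (fun n => Nat.le_succ _)
      (tendsto_nat_floor_atTop.comp (tendsto_natCast_atTop_atTop.atTop_mul_const hτ))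
    exact ((tendsto_pow_atTop_atTop_of_one_lt hKR).comp hℓ_top).inv_tendsto_atTop
  have hlight : ∀ n : ℕ, 0 < n →
      (X n).pr {x | (X n).p x ≤ ((K : ℝ) ^ ℓ n)⁻¹} ≤ selfInfoTail K X R n := fun n hn =>
    (X n).pr_setOf_le_le_pr_logb_gt hKR (Nat.cast_pos.2 hn) <| by
      rw [← Real.rpow_natCast, ← Real.rpow_neg (by positivity)]
      exact Real.rpow_lt_rpow_of_exponent_lt hKR (by nlinarith [hℓ_gt n])
  choose φ ψ hov herr using fun n =>
    (X n).exists_code_ovP_le_errP_le (K := K) (ℓ := ℓ n) (by omega) (Nat.succ_pos _) hb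
  refine ⟨by positivity, φ, ψ, ?_, ?_⟩
  · refine limsup_le_of_forall_eventually_lt (fun n => (X n).pr_nonneg _) fun y hy => ?_
    filter_upwards [eventually_lt_of_limsup_le h (by linarith : a + b < a + b + (y - a) / 2)
        fun n => (X n).pr_le_one _, hc.eventually (gt_mem_nhds (half_pos (sub_pos.2 hy))),
      eventually_gt_atTop 0] with n hqn hcn hn
    have hmax : max ((X n).pr {x | (X n).p x ≤ ((K : ℝ) ^ ℓ n)⁻¹} - b) 0 ≤ a + (y - a) / 2 :=
      max_le (by linarith [hlight n hn]) (by linarith)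
    linarith [herr n]
  · refine limsup_le_of_forall_eventually_lt (fun n => (X n).pr_nonneg _) fun y hy => ?_
    filter_upwards [hℓ_le] with n hn
    exact (((X n).ovP_anti (φ n) hn).trans (hov n)).trans_lt hy

theorem limsup_selfInfoTail_le_of_firstAch {K : ℕ} (hK : 1 < K) (X : Source 𝒳)
    {a b R γ : ℝ} (hγ : 0 < γ) (h : FirstAch K X a b R) :
    limsup (selfInfoTail K X (R + γ)) atTop ≤ a + b := by
  obtain ⟨hR, φ, ψ, herr, hov⟩ := h
  have hKR : (1 : ℝ) < K := by exact_mod_cast hK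
  set r : ℝ := (K : ℝ) ^ (-γ)
  have hr0 : 0 ≤ r := by positivity
  have hr1 : r < 1 := Real.rpow_lt_one_of_one_lt_of_neg hKR (neg_lt_zero.2 hγ)
  have hsmall : Tendsto (fun n : ℕ => (n * R + 1) * r ^ n) atTop (𝓝 0) := by
    have := ((tendsto_self_mul_const_pow_of_lt_one hr0 hr1).mul_const R).add
      (tendsto_pow_atTop_nhds_zero_of_lt_one hr0 hr1)
    simpa [add_mul, mul_right_comm] using this
  have hbound : ∀ n : ℕ, 0 < n → selfInfoTail K X (R + γ) n ≤
      errP (X n) (φ n) (ψ n) + ovP (X n) (φ n) (n * R) + (n * R + 1) * r ^ n := by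
    intro n hn
    have hK_pow : (K : ℝ) ^ ((n : ℝ) * R) * (K : ℝ) ^ (-((n : ℝ) * (R + γ))) = r ^ n := by
      rw [← Real.rpow_add (by positivity), ← Real.rpow_mul_natCast (by positivity)]
      ring_nf
    calc selfInfoTail K X (R + γ) n
        ≤ (X n).pr {x | (X n).p x ≤ (K : ℝ) ^ (-((n : ℝ) * (R + γ)))} :=
          (X n).pr_logb_gt_le_pr_setOf_le hKR (Nat.cast_pos.2 hn) _
      _ ≤ errP (X n) (φ n) (ψ n) + ovP (X n) (φ n) (n * R) +
            (n * R + 1) * (K : ℝ) ^ ((n : ℝ) * R) * (K : ℝ) ^ (-((n : ℝ) * (R + γ))) :=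
          (X n).pr_le_errP_add_ovP_add (by omega) _ _ (by positivity) (by positivity)
      _ = _ := by rw [mul_assoc _ _ ((K : ℝ) ^ _), hK_pow]
  refine limsup_le_of_forall_eventually_lt (fun n => (X n).pr_nonneg _) fun y hy => ?_
  filter_upwards [eventually_lt_of_limsup_le herr (by linarith : a < a + (y - a - b) / 3)
      fun n => (X n).pr_le_one _,
    eventually_lt_of_limsup_le hov (by linarith : b < b + (y - a - b) / 3)
      fun n => (X n).pr_le_one _,
    hsmall.eventually (gt_mem_nhds (by linarith : (0 : ℝ) < (y - a - b) / 3)),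
    eventually_gt_atTop 0] with n h1 h2 h3 hn
  linarith [hbound n hn]

theorem nonneg_of_limsup_selfInfoTail_le {K : ℕ} (hK : 1 < K) (X : Source 𝒳) {ε R : ℝ}
    (hε : ε < 1) (h : limsup (selfInfoTail K X R) atTop ≤ ε) : 0 ≤ R := by
  have hKR : (1 : ℝ) < K := by exact_mod_cast hK
  by_contra! hR
  have hone : selfInfoTail K X R = fun _ => 1 := funext fun n =>
    (congrArg (X n).pr (eq_univ_of_forall fun x =>
      hR.trans_le (div_nonneg ((X n).logb_one_div_nonneg hKR x) n.cast_nonneg))).trans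
      (X n).pr_univ
  rw [hone, limsup_const] at h
  linarith

theorem ropt_eq_hbar {K : ℕ} (hK : 1 < K) (X : Source 𝒳) {ε a b : ℝ} (hε : ε < 1)
    (ha : 0 ≤ a) (hb : 0 ≤ b) (hab : a + b = ε) : Ropt K X a b = Hbar K X ε := by
  subst hab
  exact csInf_eq_csInf_of_forall_add_mem ⟨0, fun R hR => hR.1⟩
    ⟨0, fun R hR => nonneg_of_limsup_selfInfoTail_le hK X hε hR⟩
    (fun R hR γ hγ => limsup_selfInfoTail_le_of_firstAch hK X hγ hR)
    (fun R hR γ hγ => firstAch_add_of_limsup_selfInfoTail_le hK X ha hb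
      (nonneg_of_limsup_selfInfoTail_le hK X hε hR) hγ hR)

theorem statement10_general {𝒳 : Type*} (K : ℕ) (hK : 2 ≤ K) (X : Source 𝒳)
    (ε ε₁ ε₂ : ℝ) (hε0 : 0 ≤ ε) (hε1 : ε < 1)
    (h₁ : 0 ≤ ε₁) (h₂ : 0 ≤ ε₂) (hsum : ε₁ + ε₂ = ε) :
    Ropt K X ε₁ ε₂ = Hbar K X ε ∧ Ropt K X ε 0 = Hbar K X ε ∧
    Ropt K X 0 ε = Hbar K X ε :=
  ⟨ropt_eq_hbar hK X hε1 h₁ h₂ hsum, ropt_eq_hbar hK X hε1 hε0 le_rfl (add_zero ε),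
    ropt_eq_hbar hK X hε1 le_rfl hε0 (zero_add ε)⟩

/-- for ε₁ + ε₂ = ε, R(ε₁,ε₂|X) = R(ε,0|X) = R(0,ε|X) = H̄_ε(X). -/
theorem statement10 {𝒳 : Type*} [Countable 𝒳] (K : ℕ) (hK : 2 ≤ K) (X : Source 𝒳)
    (ε ε₁ ε₂ : ℝ) (hε0 : 0 ≤ ε) (hε1 : ε < 1)
    (h₁ : 0 ≤ ε₁) (h₂ : 0 ≤ ε₂) (hsum : ε₁ + ε₂ = ε) :
    Ropt K X ε₁ ε₂ = Hbar K X ε ∧ Ropt K X ε 0 = Hbar K X ε ∧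
    Ropt K X 0 ε = Hbar K X ε :=
  statement10_general K hK X ε ε₁ ε₂ hε0 hε1 h₁ h₂ hsum
end NY
end

section
/- For any general source X and any ε, δ ∈ [0,1) satisfying ε + δ < 1, the three quantities defined from type I achievability, type II achievability, and optimistic achievability coincide: R†(ε,δ|X) = R‡(ε,δ|X) = R*(ε,δ|X). -/
open Filter MeasureTheory

namespace NY

variable {𝒳 : Type*}

section StatementThirteen

variable {𝒳 : Type*}

lemma pr_nonneg {α : Type*} (P : Dist α) (A : Set α) : 0 ≤ P.pr A :=
  tsum_nonneg fun x => P.nonneg x.1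

lemma pr_le_one {α : Type*} (P : Dist α) (A : Set α) : P.pr A ≤ 1 := by
  have := Summable.tsum_subtype_le P.p A P.nonneg P.hasSum.summable
  simpa [Dist.pr, P.hasSum.tsum_eq] using this

lemma pr_empty {α : Type*} (P : Dist α) : P.pr (∅ : Set α) = 0 := by
  simp [Dist.pr]

lemma pr_univ {α : Type*} (P : Dist α) : P.pr (Set.univ : Set α) = 1 := by
  simpa [Dist.pr, tsum_univ] using P.hasSum.tsum_eq

lemma one_le_wlen {K : ℕ} (u : Word K) : 1 ≤ wlen u := by
  have : 1 ≤ u.1.length := List.length_pos_iff.mpr u.2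
  unfold wlen; exact_mod_cast this

lemma dist_nonempty {α : Type*} (P : Dist α) : Nonempty α := by
  by_contra h
  rw [not_nonempty_iff] at h
  have := P.hasSum.tsum_eq
  rw [tsum_empty] at this
  norm_num at this

/-- diagonal extraction -/
lemma diag {Q : ℕ → ℕ → Prop} (h : ∀ k, ∃ ns : ℕ → ℕ, StrictMono ns ∧ ∀ i, Q k (ns i)) :
    ∃ m : ℕ → ℕ, StrictMono m ∧ ∀ k, Q k (m k) := by
  choose F hF hQ using h
  refine ⟨fun k => Nat.rec (F 0 0) (fun k ih => F (k + 1) (ih + 1)) k, ?_, ?_⟩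
  · apply strictMono_nat_of_lt_succ
    intro k
    exact lt_of_lt_of_le (Nat.lt_succ_self _) ((hF (k + 1)).le_apply)
  · intro k
    cases k with
    | zero => exact hQ 0 0
    | succ k => exact hQ (k + 1) _

/-- injection into words -/
lemma exists_word_inj (K : ℕ) (hK : 2 ≤ K) (β : Type*) [Countable β] :
    ∃ f : β → Word K, Function.Injective f := by
  obtain ⟨g, hg⟩ := exists_injective_nat β
  have h0 : 0 < K := by omega
  refine ⟨fun b => ⟨List.replicate (g b + 1) ⟨0, h0⟩, by simp⟩, ?_⟩
  intro a b hab
  apply hg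
  have := congrArg (fun u : Word K => u.1.length) hab
  simpa using this

lemma errP_bddAbove {K : ℕ} (X : Source 𝒳) (φ : ∀ n, (Fin n → 𝒳) → Word K)
    (ψ : ∀ n, Word K → (Fin n → 𝒳)) :
    IsBoundedUnder (· ≤ ·) atTop (fun n => errP (X n) (φ n) (ψ n)) :=
  isBoundedUnder_of ⟨1, fun n => pr_le_one _ _⟩

lemma errP_bddBelow {K : ℕ} (X : Source 𝒳) (φ : ∀ n, (Fin n → 𝒳) → Word K)
    (ψ : ∀ n, Word K → (Fin n → 𝒳)) :
    IsBoundedUnder (· ≥ ·) atTop (fun n => errP (X n) (φ n) (ψ n)) :=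
  isBoundedUnder_of ⟨0, fun n => pr_nonneg _ _⟩

lemma ovP_bddAbove {K : ℕ} (X : Source 𝒳) (φ : ∀ n, (Fin n → 𝒳) → Word K) (η : ℕ → ℝ) :
    IsBoundedUnder (· ≤ ·) atTop (fun n => ovP (X n) (φ n) (η n)) :=
  isBoundedUnder_of ⟨1, fun n => pr_le_one _ _⟩

lemma ovP_bddBelow {K : ℕ} (X : Source 𝒳) (φ : ∀ n, (Fin n → 𝒳) → Word K) (η : ℕ → ℝ) :
    IsBoundedUnder (· ≥ ·) atTop (fun n => ovP (X n) (φ n) (η n)) :=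
  isBoundedUnder_of ⟨0, fun n => pr_nonneg _ _⟩

lemma typeI_to_opt {K : ℕ} {X : Source 𝒳} {ε δ R : ℝ} (h : TypeIAch K X ε δ R) :
    OptFirstAch K X ε δ R := by
  obtain ⟨hR, φ, ψ, herr, hov⟩ := h
  refine ⟨hR, φ, ψ, fun γ hγ => ?_⟩
  have h1 : ∀ᶠ n in atTop, errP (X n) (φ n) (ψ n) < ε + γ :=
    eventually_lt_of_limsup_lt (lt_of_le_of_lt herr (by linarith)) (errP_bddAbove X φ ψ)
  have h2 : ∃ᶠ n in atTop, ovP (X n) (φ n) ((n : ℝ) * R) < δ + γ :=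
    frequently_lt_of_liminf_lt ((ovP_bddAbove X φ _).isCoboundedUnder_ge)
      (lt_of_le_of_lt hov (by linarith))
  obtain ⟨ns, hns, hP⟩ := extraction_of_frequently_atTop (h2.and_eventually h1)
  exact ⟨ns, hns, fun i => ⟨(hP i).2.le, (hP i).1.le⟩⟩

lemma typeII_to_opt {K : ℕ} {X : Source 𝒳} {ε δ R : ℝ} (h : TypeIIAch K X ε δ R) :
    OptFirstAch K X ε δ R := by
  obtain ⟨hR, φ, ψ, herr, hov⟩ := h
  refine ⟨hR, φ, ψ, fun γ hγ => ?_⟩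
  have h1 : ∀ᶠ n in atTop, ovP (X n) (φ n) ((n : ℝ) * R) < δ + γ :=
    eventually_lt_of_limsup_lt (lt_of_le_of_lt hov (by linarith)) (ovP_bddAbove X φ _)
  have h2 : ∃ᶠ n in atTop, errP (X n) (φ n) (ψ n) < ε + γ :=
    frequently_lt_of_liminf_lt ((errP_bddAbove X φ ψ).isCoboundedUnder_ge)
      (lt_of_le_of_lt herr (by linarith))
  obtain ⟨ns, hns, hP⟩ := extraction_of_frequently_atTop (h2.and_eventually h1)
  exact ⟨ns, hns, fun i => ⟨(hP i).1.le, (hP i).2.le⟩⟩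

lemma opt_pos {K : ℕ} {X : Source 𝒳} {ε δ R : ℝ} (hδ1 : δ < 1)
    (h : OptFirstAch K X ε δ R) : 0 < R := by
  obtain ⟨hR, φ, ψ, hopt⟩ := h
  rcases hR.lt_or_eq with h' | h'
  · exact h'
  exfalso
  obtain ⟨ns, hns, hP⟩ := hopt ((1 - δ) / 2) (by linarith)
  have h2 := (hP 0).2
  rw [← h'] at h2
  have hov : ovP (X (ns 0)) (φ (ns 0)) ((ns 0 : ℝ) * 0) = 1 := by
    unfold ovP
    have hset : {x : Fin (ns 0) → 𝒳 | wlen (φ (ns 0) x) > (ns 0 : ℝ) * 0} = Set.univ := by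
      ext x
      simp only [Set.mem_setOf_eq, Set.mem_univ, iff_true, mul_zero]
      have := one_le_wlen (φ (ns 0) x)
      linarith
    rw [hset, pr_univ]
  rw [hov] at h2
  linarith

lemma opt_to_typeI {K : ℕ} [Countable 𝒳] {X : Source 𝒳} {ε δ R : ℝ} (hK : 2 ≤ K)
    (hε0 : 0 ≤ ε) (h : OptFirstAch K X ε δ R) : TypeIAch K X ε δ R := by
  classical
  obtain ⟨hR, φ, ψ, hopt⟩ := h
  obtain ⟨m, hm, hQ⟩ := diag (Q := fun k n =>
      errP (X n) (φ n) (ψ n) ≤ ε + 1 / (k + 1) ∧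
      ovP (X n) (φ n) ((n : ℝ) * R) ≤ δ + 1 / (k + 1))
    (fun k => hopt (1 / (k + 1)) (by positivity))
  choose f hf using fun n => exists_word_inj K hK (Fin n → 𝒳)
  have hne : ∀ n : ℕ, Nonempty (Fin n → 𝒳) := fun n => dist_nonempty (X n)
  set φ' : ∀ n, (Fin n → 𝒳) → Word K := fun n =>
    if ∃ k, m k = n then φ n else f n with hφ'
  set ψ' : ∀ n, Word K → (Fin n → 𝒳) := fun n =>
    if ∃ k, m k = n then ψ n else Function.invFun (f n) with hψ'
  have hrange : ∀ n, (∃ k, m k = n) →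
      errP (X n) (φ' n) (ψ' n) = errP (X n) (φ n) (ψ n) ∧
      ovP (X n) (φ' n) ((n : ℝ) * R) = ovP (X n) (φ n) ((n : ℝ) * R) := by
    intro n hn
    simp only [hφ', hψ', if_pos hn, and_self]
  have hout : ∀ n, ¬ (∃ k, m k = n) → errP (X n) (φ' n) (ψ' n) = 0 := by
    intro n hn
    have : {x : Fin n → 𝒳 | ψ' n (φ' n x) ≠ x} = ∅ := by
      ext x
      simp only [hφ', hψ', if_neg hn, Set.mem_setOf_eq, Set.mem_empty_iff_false, iff_false,
        not_not]
      exact Function.leftInverse_invFun (hf n) x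
    rw [errP, this, pr_empty]
  refine ⟨hR, φ', ψ', ?_, ?_⟩
  · apply le_of_forall_pos_le_add
    intro γ hγ
    apply limsup_le_of_le ((errP_bddBelow X φ' ψ').isCoboundedUnder_le)
    obtain ⟨k0, hk0⟩ := exists_nat_one_div_lt hγ
    filter_upwards [eventually_ge_atTop (m k0)] with n hn
    by_cases hex : ∃ k, m k = n
    · obtain ⟨k, hk⟩ := hex
      have hkk : k0 ≤ k := by
        by_contra hc
        push_neg at hc
        have := hm hc
        omega
      have h1 := (hQ k).1
      rw [hk] at h1
      have h2 : (1 : ℝ) / (k + 1) ≤ 1 / (k0 + 1) := by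
        apply one_div_le_one_div_of_le (by positivity)
        have : (k0 : ℝ) ≤ k := Nat.cast_le.mpr hkk; push_cast; linarith
      rw [(hrange n ⟨k, hk⟩).1]
      linarith
    · rw [hout n hex]
      linarith
  · apply le_of_forall_pos_le_add
    intro γ hγ
    apply liminf_le_of_frequently_le _ (ovP_bddBelow X φ' _)
    rw [frequently_atTop]
    intro N
    obtain ⟨k0, hk0⟩ := exists_nat_one_div_lt hγ
    refine ⟨m (max k0 N), le_trans (le_max_right k0 N) (hm.le_apply), ?_⟩
    rw [(hrange _ ⟨max k0 N, rfl⟩).2]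
    have h1 := (hQ (max k0 N)).2
    have h2 : (1 : ℝ) / (max k0 N + 1) ≤ 1 / (k0 + 1) := by
      apply one_div_le_one_div_of_le (by positivity)
      have : (k0 : ℝ) ≤ max k0 N := Nat.cast_le.mpr (le_max_left k0 N)
      linarith
    linarith

lemma opt_to_typeII {K : ℕ} {X : Source 𝒳} {ε δ R : ℝ} (hK : 2 ≤ K)
    (hδ0 : 0 ≤ δ) (hδ1 : δ < 1) (h : OptFirstAch K X ε δ R) : TypeIIAch K X ε δ R := by
  classical
  have hRpos : 0 < R := opt_pos hδ1 h
  obtain ⟨hR, φ, ψ, hopt⟩ := h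
  obtain ⟨m, hm, hQ⟩ := diag (Q := fun k n =>
      errP (X n) (φ n) (ψ n) ≤ ε + 1 / (k + 1) ∧
      ovP (X n) (φ n) ((n : ℝ) * R) ≤ δ + 1 / (k + 1))
    (fun k => hopt (1 / (k + 1)) (by positivity))
  have hne : ∀ n : ℕ, Nonempty (Fin n → 𝒳) := fun n => dist_nonempty (X n)
  have h0 : 0 < K := by omega
  set w0 : Word K := ⟨[⟨0, h0⟩], by simp⟩ with hw0
  set φ' : ∀ n, (Fin n → 𝒳) → Word K := fun n =>
    if ∃ k, m k = n then φ n else fun _ => w0 with hφ'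
  set ψ' : ∀ n, Word K → (Fin n → 𝒳) := fun n =>
    if ∃ k, m k = n then ψ n else fun _ => (hne n).some with hψ'
  have hrange : ∀ n, (∃ k, m k = n) →
      errP (X n) (φ' n) (ψ' n) = errP (X n) (φ n) (ψ n) ∧
      ovP (X n) (φ' n) ((n : ℝ) * R) = ovP (X n) (φ n) ((n : ℝ) * R) := by
    intro n hn
    simp only [hφ', hψ', if_pos hn, and_self]
  have hout : ∀ n, ¬ (∃ k, m k = n) → 1 ≤ (n : ℝ) * R →
      ovP (X n) (φ' n) ((n : ℝ) * R) = 0 := by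
    intro n hn hnR
    have : {x : Fin n → 𝒳 | wlen (φ' n x) > (n : ℝ) * R} = ∅ := by
      ext x
      simp only [hφ', if_neg hn, Set.mem_setOf_eq, Set.mem_empty_iff_false, iff_false, not_lt]
      have : wlen w0 = 1 := by simp [wlen, hw0]
      rw [this]
      exact hnR
    rw [ovP, this, pr_empty]
  refine ⟨hR, φ', ψ', ?_, ?_⟩
  · apply le_of_forall_pos_le_add
    intro γ hγ
    apply liminf_le_of_frequently_le _ (errP_bddBelow X φ' ψ')
    rw [frequently_atTop]
    intro N
    obtain ⟨k0, hk0⟩ := exists_nat_one_div_lt hγ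
    refine ⟨m (max k0 N), le_trans (le_max_right k0 N) (hm.le_apply), ?_⟩
    rw [(hrange _ ⟨max k0 N, rfl⟩).1]
    have h1 := (hQ (max k0 N)).1
    have h2 : (1 : ℝ) / (max k0 N + 1) ≤ 1 / (k0 + 1) := by
      apply one_div_le_one_div_of_le (by positivity)
      have : (k0 : ℝ) ≤ max k0 N := Nat.cast_le.mpr (le_max_left k0 N)
      linarith
    linarith
  · apply le_of_forall_pos_le_add
    intro γ hγ
    apply limsup_le_of_le ((ovP_bddBelow X φ' _).isCoboundedUnder_le)
    obtain ⟨k0, hk0⟩ := exists_nat_one_div_lt hγ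
    obtain ⟨N1, hN1⟩ := exists_nat_ge (1 / R)
    filter_upwards [eventually_ge_atTop (m k0), eventually_ge_atTop N1] with n hn hn1
    by_cases hex : ∃ k, m k = n
    · obtain ⟨k, hk⟩ := hex
      have hkk : k0 ≤ k := by
        by_contra hc
        push_neg at hc
        have := hm hc
        omega
      have h1 := (hQ k).2
      rw [hk] at h1
      have h2 : (1 : ℝ) / (k + 1) ≤ 1 / (k0 + 1) := by
        apply one_div_le_one_div_of_le (by positivity)
        have : (k0 : ℝ) ≤ k := Nat.cast_le.mpr hkk; push_cast; linarith
      rw [(hrange n ⟨k, hk⟩).2]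
      linarith
    · have hnR : 1 ≤ (n : ℝ) * R := by
        have hnn : (1 / R : ℝ) ≤ n := le_trans hN1 (Nat.cast_le.mpr hn1)
        rw [div_le_iff₀ hRpos] at hnn
        linarith
      rw [hout n hex hnR]
      linarith

end StatementThirteen

/-- R†(ε,δ|X) = R‡(ε,δ|X) = R*(ε,δ|X). -/
theorem statement13 {𝒳 : Type*} [Countable 𝒳] (K : ℕ) (hK : 2 ≤ K) (X : Source 𝒳)
    (ε δ : ℝ) (hε0 : 0 ≤ ε) (hε1 : ε < 1) (hδ0 : 0 ≤ δ) (hδ1 : δ < 1) (hεδ : ε + δ < 1) :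
    Rdagger K X ε δ = Rddagger K X ε δ ∧ Rddagger K X ε δ = RoptStar K X ε δ := by
  have hA : {R | TypeIAch K X ε δ R} = {R | OptFirstAch K X ε δ R} :=
    Set.ext fun R => ⟨fun h => typeI_to_opt h, fun h => opt_to_typeI hK hε0 h⟩
  have hB : {R | TypeIIAch K X ε δ R} = {R | OptFirstAch K X ε δ R} :=
    Set.ext fun R => ⟨fun h => typeII_to_opt h, fun h => opt_to_typeII hK hδ0 hδ1 h⟩
  constructor
  · rw [Rdagger, Rddagger, hA, hB]
  · rw [Rddagger, RoptStar, hB]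
end NY
end
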